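/- arXiv:1001.1269 — 5 statements merged into one kernel-verified Lean document; each statement's English description precedes it below -/
import Mathlib

section
/- A discrete vector field V on a regular CW complex is a gradient vector field (i.e., contains no nontrivial closed V-paths) if and only if the relation it induces on cells has no directed cycles; equivalently, the transitive closure of the induced covering relation is a strict partial order on the set of cells. -/
open Classical

variable {Cell : Type}

/-- A discrete vector field: a set of pairs (σ,τ) with σ a facet of τ,
each cell occurring in at most one pair. -/
def IsVectorField (facet : Cell → Cell → Prop) (V : Set (Cell × Cell)) : Prop :=
  (∀ p ∈ V, facet p.1 p.2) ∧
  ∀ p ∈ V, ∀ q ∈ V, (p.1 = q.1 ∨ p.1 = q.2 ∨ p.2 = q.1 ∨ p.2 = q.2) → p = q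

/-- The covering relation ←_V : `covRel facet V x y` means x ←_V y. -/
def covRel (facet : Cell → Cell → Prop) (V : Set (Cell × Cell)) (x y : Cell) : Prop :=
  (facet x y ∧ (x, y) ∉ V) ∨ (y, x) ∈ V

/-- The strict partial order ≺_V induced by V: transitive closure of ←_V. -/
def indOrder (facet : Cell → Cell → Prop) (V : Set (Cell × Cell)) : Cell → Cell → Prop :=
  Relation.TransGen (covRel facet V)

/-- The reflexive closure ⪯_V of ≺_V. -/
def indOrderLe (facet : Cell → Cell → Prop) (V : Set (Cell × Cell)) : Cell → Cell → Prop :=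
  Relation.ReflTransGen (covRel facet V)

/-- A V-path (σ₀,τ₀,σ₁,…,τ_{r-1},σ_r), encoded by its first cell σ₀ and the
list of pairs (τ_i, σ_{i+1}). -/
def IsVPath (facet : Cell → Cell → Prop) (V : Set (Cell × Cell)) :
    Cell → List (Cell × Cell) → Prop
  | _, [] => True
  | σ, (τ, σ') :: rest => (σ, τ) ∈ V ∧ facet σ' τ ∧ (σ', τ) ∉ V ∧ IsVPath facet V σ' rest

/-- The last cell σ_r of a V-path. -/
def pathLast (σ : Cell) (l : List (Cell × Cell)) : Cell :=
  (l.getLast?.map Prod.snd).getD σ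

/-- No nontrivial closed V-paths. -/
def NoClosedVPath (facet : Cell → Cell → Prop) (V : Set (Cell × Cell)) : Prop :=
  ∀ σ (l : List (Cell × Cell)), IsVPath facet V σ l → l ≠ [] → pathLast σ l ≠ σ

/-- A discrete gradient vector field. -/
def IsGradient (facet : Cell → Cell → Prop) (V : Set (Cell × Cell)) : Prop :=
  IsVectorField facet V ∧ NoClosedVPath facet V

/-- A cell is critical if it belongs to no pair of V. -/
def IsCritical (V : Set (Cell × Cell)) (x : Cell) : Prop :=
  ∀ p ∈ V, p.1 ≠ x ∧ p.2 ≠ x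

/-- f is a discrete Morse function with gradient vector field V. -/
def IsMorse (facet : Cell → Cell → Prop) (V : Set (Cell × Cell)) (f : Cell → ℝ) : Prop :=
  ∀ σ τ, facet σ τ → (((σ, τ) ∉ V → f σ < f τ) ∧ ((σ, τ) ∈ V → f τ ≤ f σ))

/-- f is a discrete pseudo-Morse function consistent with V. -/
def IsPseudoMorse (facet : Cell → Cell → Prop) (V : Set (Cell × Cell)) (f : Cell → ℝ) : Prop :=
  ∀ σ τ, facet σ τ → (((σ, τ) ∉ V → f σ ≤ f τ) ∧ ((σ, τ) ∈ V → f τ ≤ f σ))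

/-- The pairs (σ_i, τ_i) of a V-path given by σ₀ and l = [(τ₀,σ₁),…]. -/
def oldPairs (σ0 : Cell) (l : List (Cell × Cell)) : List (Cell × Cell) :=
  List.zip (σ0 :: l.map Prod.snd) (l.map Prod.fst)

/-- The reversed pairs (σ_{i+1}, τ_i) of a V-path. -/
def newPairs (l : List (Cell × Cell)) : List (Cell × Cell) :=
  l.map (fun p => (p.2, p.1))

/-- Reversal of V along the V-path from σ₀ ∈ ∂ρ given by l (Forman cancelation). -/
def reverseField (V : Set (Cell × Cell)) (ρ σ0 : Cell) (l : List (Cell × Cell)) :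
    Set (Cell × Cell) :=
  (V \ {p : Cell × Cell | p ∈ oldPairs σ0 l}) ∪ {p : Cell × Cell | p ∈ newPairs l} ∪ {(σ0, ρ)}

/-- A combinatorial surface (closed): facets raise dimension by one, dimensions are ≤ 2,
every 1-cell has exactly two boundary 0-cells and is a facet of exactly two 2-cells. -/
def IsCombSurface (dim : Cell → ℕ) (facet : Cell → Cell → Prop) : Prop :=
  (∀ σ τ, facet σ τ → dim τ = dim σ + 1) ∧
  (∀ x, dim x ≤ 2) ∧
  (∀ τ, dim τ = 1 → ∃ a b, a ≠ b ∧ ∀ x, facet x τ ↔ (x = a ∨ x = b)) ∧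
  (∀ τ, dim τ = 1 → ∃ A B, A ≠ B ∧ ∀ X, facet τ X ↔ (X = A ∨ X = B))

/-- A `TransGen` chain gives a function enumeration. -/
lemma aux_transGen_fn {α : Type} {r : α → α → Prop} {x y : α} (h : Relation.TransGen r x y) :
    ∃ n, 1 ≤ n ∧ ∃ a : ℕ → α, a 0 = x ∧ a n = y ∧ ∀ i < n, r (a i) (a (i + 1)) := by
  induction h with
  | @single c h =>
    refine ⟨1, le_refl _, fun i => if i = 0 then x else c, by simp, by simp, ?_⟩
    intro i hi
    have : i = 0 := by omega
    subst this; simpa using h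
  | @tail c d hxy hyz ih =>
    obtain ⟨n, hn, a, h0, hn', hstep⟩ := ih
    refine ⟨n + 1, by omega, fun i => if i ≤ n then a i else d, by simp [h0], by simp, ?_⟩
    intro i hi
    rcases Nat.lt_or_ge i n with hlt | hge
    · simp only [show i ≤ n from by omega, show i + 1 ≤ n from by omega, if_true]
      exact hstep i hlt
    · have hieq : i = n := by omega
      simp only [hieq]
      rw [if_pos (le_refl n), if_neg (by omega), hn']
      exact hyz

/-- pathLast of a cons. -/
lemma aux_pathLast_cons (σ τ σ' : Cell) (rest : List (Cell × Cell)) (h : rest ≠ []) :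
    pathLast σ ((τ, σ') :: rest) = pathLast σ' rest := by
  obtain ⟨p, t, rfl⟩ : ∃ p t, rest = p :: t := by
    cases rest with
    | nil => exact absurd rfl h
    | cons p t => exact ⟨p, t, rfl⟩
  cases hq : (p :: t).getLast? with
  | none => simp at hq
  | some q => simp [pathLast, List.getLast?_cons_cons, hq]

/-- A nonempty closed V-path yields a cycle in the covering relation. -/
lemma aux_path_to_transGen (facet : Cell → Cell → Prop) (V : Set (Cell × Cell)) :
    ∀ (l : List (Cell × Cell)) (σ : Cell), IsVPath facet V σ l → l ≠ [] →
      Relation.TransGen (covRel facet V) (pathLast σ l) σ := by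
  intro l
  induction l with
  | nil => intro σ _ h; exact absurd rfl h
  | cons p rest ih =>
    obtain ⟨τ, σ'⟩ := p
    intro σ hp _
    obtain ⟨hv, hf, hnv, hrest⟩ := hp
    have step1 : covRel facet V τ σ := Or.inr hv
    have step2 : covRel facet V σ' τ := Or.inl ⟨hf, hnv⟩
    by_cases hr : rest = []
    · subst hr
      have : pathLast σ ((τ, σ') :: ([] : List (Cell × Cell))) = σ' := by simp [pathLast]
      rw [this]
      exact Relation.TransGen.head step2 (Relation.TransGen.single step1)
    · rw [aux_pathLast_cons σ τ σ' rest hr]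
      exact Relation.TransGen.tail (Relation.TransGen.tail (ih σ' hrest hr) step2) step1

/-- The list of a V-path extracted from an alternating cycle. -/
def vList (b : ℕ → Cell) (s : ℕ) : ℕ → List (Cell × Cell)
  | 0 => []
  | r + 1 => (b (s + 2 * r + 1), b (s + 2 * r)) :: vList b s r

lemma aux_vList_isPath (facet : Cell → Cell → Prop) (V : Set (Cell × Cell))
    (b : ℕ → Cell) (s : ℕ)
    (hB : ∀ k, (b (s + 2 * k + 2), b (s + 2 * k + 1)) ∈ V)
    (hA : ∀ k, facet (b (s + 2 * k)) (b (s + 2 * k + 1)) ∧ (b (s + 2 * k), b (s + 2 * k + 1)) ∉ V) :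
    ∀ r, IsVPath facet V (b (s + 2 * r)) (vList b s r) := by
  intro r
  induction r with
  | zero => trivial
  | succ r ih =>
    refine ⟨?_, (hA r).1, (hA r).2, ih⟩
    have : s + 2 * (r + 1) = s + 2 * r + 2 := by ring
    rw [this]
    exact hB r

lemma aux_vList_last (b : ℕ → Cell) (s : ℕ) :
    ∀ r, 1 ≤ r → (vList b s r).getLast? = some (b (s + 1), b s) := by
  intro r
  induction r with
  | zero => omega
  | succ r ih =>
    intro _
    rcases Nat.eq_zero_or_pos r with h0 | hpos
    · subst h0; simp [vList]
    · have hr := ih hpos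
      have : ∃ p t, vList b s r = p :: t := by
        cases r with
        | zero => omega
        | succ m => exact ⟨_, _, rfl⟩
      obtain ⟨p, t, hpt⟩ := this
      show ((b (s + 2 * r + 1), b (s + 2 * r)) :: vList b s r).getLast? = _
      rw [hpt, List.getLast?_cons_cons, ← hpt, hr]

-- KEY LEMMA
lemma aux_no_cycle (dim : Cell → ℕ) (facet : Cell → Cell → Prop)
    (hdim : ∀ σ τ, facet σ τ → dim τ = dim σ + 1)
    (V : Set (Cell × Cell)) (hV : IsVectorField facet V)
    (hnc : NoClosedVPath facet V) : ∀ x, ¬ indOrder facet V x x := by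
  classical
  intro x hx
  obtain ⟨n, hn, a, h0, hne, hstep⟩ := aux_transGen_fn hx
  set b : ℕ → Cell := fun i => a (i % n) with hb
  have hmod : ∀ i : ℕ, (i + 1) % n = (i % n + 1) % n := by
    intro i
    conv_lhs => rw [Nat.add_mod]
    conv_rhs => rw [Nat.add_mod, Nat.mod_mod_of_dvd _ dvd_rfl]
  have hper : ∀ i, b (i + n) = b i := by
    intro i; simp only [hb, Nat.add_mod_right]
  have hstep' : ∀ i, covRel facet V (b i) (b (i + 1)) := by
    intro i
    have h1 : i % n < n := Nat.mod_lt _ (by omega)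
    have h2 := hstep (i % n) h1
    show covRel facet V (a (i % n)) (a ((i + 1) % n))
    rcases Nat.lt_or_ge (i % n + 1) n with hlt | hge
    · have : (i + 1) % n = i % n + 1 := by rw [hmod, Nat.mod_eq_of_lt hlt]
      rw [this]; exact h2
    · have heq : i % n + 1 = n := by omega
      have h3 : (i + 1) % n = 0 := by rw [hmod, heq, Nat.mod_self]
      have h4 : a (i % n + 1) = a 0 := by rw [heq, hne, ← h0]
      rw [h3, ← h4]; exact h2
  set Bs : ℕ → Prop := fun i => (b (i + 1), b i) ∈ V with hBs
  have stepA : ∀ i, ¬ Bs i → facet (b i) (b (i + 1)) ∧ (b i, b (i + 1)) ∉ V := by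
    intro i hB
    rcases hstep' i with ⟨hf, hnv⟩ | hv
    · exact ⟨hf, hnv⟩
    · exact absurd hv hB
  have dimA : ∀ i, ¬ Bs i → dim (b (i + 1)) = dim (b i) + 1 := fun i h =>
    hdim _ _ (stepA i h).1
  have dimB : ∀ i, Bs i → dim (b i) = dim (b (i + 1)) + 1 := fun i h =>
    hdim _ _ (hV.1 _ h)
  have noBB : ∀ i, Bs i → ¬ Bs (i + 1) := by
    intro i h1 h2
    have := hV.2 _ h1 _ h2 (Or.inr (Or.inl rfl))
    have he1 : b (i + 1) = b (i + 1 + 1) := congrArg Prod.fst this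
    have he2 : b i = b (i + 1) := congrArg Prod.snd this
    have hf : facet (b (i + 1)) (b i) := hV.1 _ h1
    have := hdim _ _ hf
    rw [← he2] at this
    omega
  have hBper : ∀ i, Bs (i + n) ↔ Bs i := by
    intro i
    simp only [hBs]
    rw [show i + n + 1 = i + 1 + n from by ring, hper, hper]
  -- telescoping
  have tele : ∀ s m, (∑ i ∈ Finset.Ico s (s + m), (if Bs i then (-1 : ℤ) else 1)) =
      (dim (b (s + m)) : ℤ) - dim (b s) := by
    intro s m
    induction m with
    | zero => simp
    | succ m ih =>
      rw [show s + (m + 1) = (s + m) + 1 from rfl, Finset.sum_Ico_succ_top (by omega), ih]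
      by_cases h : Bs (s + m)
      · have := dimB _ h; simp only [h, if_true]; push_cast; omega
      · have := dimA _ h; simp only [h, if_false]; push_cast; omega
  have cards : ∀ s, ((Finset.Ico s (s + n)).filter Bs).card =
      ((Finset.Ico s (s + n)).filter (fun i => ¬ Bs i)).card := by
    intro s
    have h1 := tele s n
    rw [hper s] at h1
    simp only [sub_self] at h1
    rw [← Finset.sum_filter_add_sum_filter_not (Finset.Ico s (s + n)) Bs] at h1
    have e1 : (∑ i ∈ (Finset.Ico s (s + n)).filter Bs, (if Bs i then (-1 : ℤ) else 1)) =
        -(((Finset.Ico s (s + n)).filter Bs).card : ℤ) := by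
      rw [Finset.sum_congr rfl (fun i hi => if_pos (Finset.mem_filter.mp hi).2)]
      simp
    have e2 : (∑ i ∈ (Finset.Ico s (s + n)).filter (fun i => ¬ Bs i), (if Bs i then (-1 : ℤ) else 1)) =
        (((Finset.Ico s (s + n)).filter (fun i => ¬ Bs i)).card : ℤ) := by
      rw [Finset.sum_congr rfl (fun i hi => if_neg (Finset.mem_filter.mp hi).2)]
      simp
    rw [e1, e2] at h1
    omega
  have altern : ∀ j, ¬ Bs j → Bs (j + 1) := by
    intro j hj
    by_contra h2
    set W := Finset.Ico (j + 1) (j + 1 + n) with hW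
    set SB := W.filter Bs with hSB
    set SA := W.filter (fun i => ¬ Bs i) with hSA
    have himg : SB.image (· + 1) ⊆ SA.erase (j + 1) := by
      intro m hm
      obtain ⟨i, hi, rfl⟩ := Finset.mem_image.mp hm
      obtain ⟨hiW, hiB⟩ := Finset.mem_filter.mp hi
      obtain ⟨hi1, hi2⟩ := Finset.mem_Ico.mp hiW
      have hine : i ≠ j + n := by
        rintro rfl
        exact hj ((hBper j).mp hiB)
      refine Finset.mem_erase.mpr ⟨by omega, Finset.mem_filter.mpr ⟨Finset.mem_Ico.mpr ⟨by omega, by omega⟩, noBB i hiB⟩⟩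
    have hj1A : j + 1 ∈ SA := Finset.mem_filter.mpr ⟨Finset.mem_Ico.mpr ⟨le_refl _, by omega⟩, h2⟩
    have hcard1 : SB.card ≤ (SA.erase (j + 1)).card := by
      calc SB.card = (SB.image (· + 1)).card :=
            (Finset.card_image_of_injective _ (add_left_injective 1)).symm
        _ ≤ _ := Finset.card_le_card himg
    have hcard2 : (SA.erase (j + 1)).card < SA.card :=
      Finset.card_erase_lt_of_mem hj1A
    have hc := cards (j + 1)
    rw [← hW, ← hSB, ← hSA] at hc
    omega
  -- pick start s with ¬ Bs s
  obtain ⟨s, hsA⟩ : ∃ s, ¬ Bs s := by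
    by_cases h : Bs 0
    · exact ⟨1, noBB 0 h⟩
    · exact ⟨0, h⟩
  have parity : ∀ k, ¬ Bs (s + 2 * k) ∧ Bs (s + 2 * k + 1) := by
    intro k
    induction k with
    | zero => simpa using ⟨hsA, altern s hsA⟩
    | succ k ih =>
      have h1 : ¬ Bs (s + 2 * k + 1 + 1) := noBB _ ih.2
      have he : s + 2 * (k + 1) = s + 2 * k + 1 + 1 := by ring
      rw [he]
      exact ⟨h1, altern _ h1⟩
  -- n is even
  obtain ⟨r, hr⟩ : ∃ r, n = 2 * r := by
    rcases Nat.even_or_odd n with ⟨r, hr⟩ | ⟨k, hk⟩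
    · exact ⟨r, by omega⟩
    · exfalso
      have h1 : Bs (s + 2 * k + 1) := (parity k).2
      have h2 : ¬ Bs (s + n) := by rw [show s + n = s + n from rfl, hBper]; exact hsA
      rw [hk] at h2
      exact h2 (by rw [show s + (2 * k + 1) = s + 2 * k + 1 from by ring]; exact h1)
  have hr1 : 1 ≤ r := by omega
  -- build the closed V-path
  have hB' : ∀ k, (b (s + 2 * k + 2), b (s + 2 * k + 1)) ∈ V := by
    intro k
    have := (parity k).2
    simpa [hBs, show s + 2 * k + 1 + 1 = s + 2 * k + 2 from by ring] using this
  have hA' : ∀ k, facet (b (s + 2 * k)) (b (s + 2 * k + 1)) ∧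
      (b (s + 2 * k), b (s + 2 * k + 1)) ∉ V := fun k => stepA _ (parity k).1
  have hpath := aux_vList_isPath facet V b s hB' hA' r
  have hlast := aux_vList_last b s r hr1
  have hnonnil : vList b s r ≠ [] := by
    cases r with
    | zero => omega
    | succ m => simp [vList]
  have hplast : pathLast (b (s + 2 * r)) (vList b s r) = b s := by
    rw [pathLast, hlast]; rfl
  have hσ : b (s + 2 * r) = b s := by rw [← hr, hper]
  exact hnc _ _ hpath hnonnil (by rw [hplast, hσ])

/-- a discrete vector field is a gradient vector field (no nontrivial
closed V-paths) iff the induced relation has no directed cycles; equivalently the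
transitive closure of the covering relation is a strict partial order. -/
theorem stmt0 [Fintype Cell] (dim : Cell → ℕ) (facet : Cell → Cell → Prop)
    (hdim : ∀ σ τ, facet σ τ → dim τ = dim σ + 1)
    (V : Set (Cell × Cell)) (hV : IsVectorField facet V) :
    (NoClosedVPath facet V ↔ ∀ x, ¬ indOrder facet V x x) ∧
    ((∀ x, ¬ indOrder facet V x x) ↔ IsStrictOrder Cell (indOrder facet V)) := by
  constructor
  · constructor
    · exact fun hnc => aux_no_cycle dim facet hdim V hV hnc
    · intro hac σ l hp hne hcl
      have := aux_path_to_transGen facet V l σ hp hne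
      rw [hcl] at this
      exact hac σ this
  · constructor
    · intro h
      exact { irrefl := h, trans := fun a b c hab hbc => Relation.TransGen.trans hab hbc }
    · intro h x
      exact h.irrefl x
end

section
/- Let f be a function on the cells of a finite regular CW complex and V a discrete gradient vector field. Then f is a discrete pseudo-Morse function consistent with V if and only if for every ε>0 there exists a discrete Morse function f_ε with ‖f_ε − f‖_∞ ≤ ε whose gradient vector field is V. -/
open Classical

variable {Cell : Type}

/-! Forman's theorem follows from acyclicity of `covRel` (the relation x ←_V y): counting the
cells weakly below a cell gives a function strictly increasing along it, hence a Morse function `g`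
for `V`, and for a pseudo-Morse `f` and small `δ > 0`, `f + δ g` is a Morse function close to `f`.
On a `covRel`-cycle through cells of dimension at most `d`, a cell of dimension `d` can only go down
along a pair of `V`, and the lower cell of a pair can only go up along a facet not in `V`; so the
cycle, read backwards, consists of V-path steps, which are well-founded on a finite complex.
Conversely, the weak inequalities defining pseudo-Morse functions survive uniform limits. -/

namespace Relation

theorem TransGen.exists_rel_transGen_self {α : Type*} {r : α → α → Prop} {a : α}
    (h : TransGen r a a) : ∃ b, r a b ∧ TransGen r b b := by
  obtain ⟨b, hab, hba⟩ := TransGen.head'_iff.mp h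
  exact ⟨b, hab, TransGen.tail' hba hab⟩

theorem exists_nat_strictMono_of_irrefl_transGen {α : Type*} [Finite α] {r : α → α → Prop}
    (h : ∀ x, ¬ TransGen r x x) : ∃ g : α → ℕ, ∀ x y, r x y → g x < g y := by
  refine ⟨fun x => {z | ReflTransGen r z x}.ncard, fun x y hxy => Set.ncard_lt_ncard ?_⟩
  refine ⟨fun z hz => ReflTransGen.tail hz hxy, fun hyx => h y ?_⟩
  exact TransGen.tail' (hyx ReflTransGen.refl) hxy

end Relation

open Relation

section

variable {facet : Cell → Cell → Prop} {V : Set (Cell × Cell)}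

def VStep (facet : Cell → Cell → Prop) (V : Set (Cell × Cell)) (σ σ' : Cell) : Prop :=
  ∃ τ, (σ, τ) ∈ V ∧ facet σ' τ ∧ (σ', τ) ∉ V

theorem pathLast_cons (σ : Cell) (p : Cell × Cell) (l : List (Cell × Cell)) :
    pathLast σ (p :: l) = pathLast p.2 l := by
  cases l with
  | nil => rfl
  | cons q l => simp [pathLast, List.getLast?_eq_some_getLast]

theorem exists_isVPath_of_transGen_vStep {σ σ' : Cell} (h : TransGen (VStep facet V) σ σ') :
    ∃ l, IsVPath facet V σ l ∧ l ≠ [] ∧ pathLast σ l = σ' := by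
  induction h using TransGen.head_induction_on with
  | single hstep =>
    obtain ⟨τ, hV, hfacet, hnV⟩ := hstep
    exact ⟨[(τ, _)], ⟨hV, hfacet, hnV, trivial⟩, List.cons_ne_nil _ _, rfl⟩
  | head hstep _ ih =>
    obtain ⟨τ, hV, hfacet, hnV⟩ := hstep
    obtain ⟨l, hl, -, hlast⟩ := ih
    exact ⟨(τ, _) :: l, ⟨hV, hfacet, hnV, hl⟩, List.cons_ne_nil _ _,
      (pathLast_cons _ _ _).trans hlast⟩

theorem NoClosedVPath.wellFounded_vStep [Finite Cell] (h : NoClosedVPath facet V) :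
    WellFounded (VStep facet V) := by
  have : Std.Irrefl (TransGen (VStep facet V)) := ⟨fun σ hσ => by
    obtain ⟨l, hl, hne, hlast⟩ := exists_isVPath_of_transGen_vStep hσ
    exact h σ l hl hne hlast⟩
  exact Subrelation.wf TransGen.single (Finite.wellFounded_of_trans_of_irrefl _)

theorem IsVectorField.notMem_of_fst_mem (hV : IsVectorField facet V)
    (hirr : ∀ σ, ¬ facet σ σ) {ρ σ τ : Cell} (hστ : (σ, τ) ∈ V) : (ρ, σ) ∉ V := by
  intro hρσ
  obtain ⟨rfl, rfl⟩ := Prod.mk.inj (hV.2 _ hρσ _ hστ (Or.inr (Or.inr (Or.inl rfl))))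
  exact hirr ρ (hV.1 _ hστ)

theorem exists_pair_of_covRel_cycle_top {dim : Cell → ℕ}
    (hdim : ∀ σ τ, facet σ τ → dim τ = dim σ + 1) {d : ℕ}
    (hmax : ∀ z, TransGen (covRel facet V) z z → dim z ≤ d) {τ : Cell}
    (hτ : TransGen (covRel facet V) τ τ) (hdτ : dim τ = d) :
    ∃ σ, (σ, τ) ∈ V ∧ TransGen (covRel facet V) σ σ := by
  obtain ⟨w, hτw | hwτ, hw⟩ := hτ.exists_rel_transGen_self
  · have := hmax w hw
    have := hdim τ w hτw.1
    omega
  · exact ⟨w, hwτ, hw⟩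

theorem exists_vStep_of_covRel_cycle_bottom {dim : Cell → ℕ}
    (hdim : ∀ σ τ, facet σ τ → dim τ = dim σ + 1) (hVF : IsVectorField facet V) {d : ℕ}
    (hmax : ∀ z, TransGen (covRel facet V) z z → dim z ≤ d) {σ τ : Cell}
    (hσ : TransGen (covRel facet V) σ σ) (hστ : (σ, τ) ∈ V) (hdτ : dim τ = d) :
    ∃ σ' τ', TransGen (covRel facet V) σ' σ' ∧ (σ', τ') ∈ V ∧ dim τ' = d ∧
      VStep facet V σ' σ := by
  have hirr : ∀ x, ¬ facet x x := fun x hx => by have := hdim x x hx; omega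
  obtain ⟨w, hσw | hwσ, hw⟩ := hσ.exists_rel_transGen_self
  · have hdw : dim w = d := by rw [hdim σ w hσw.1, ← hdτ, hdim σ τ (hVF.1 _ hστ)]
    obtain ⟨σ', hσ'w, hσ'⟩ := exists_pair_of_covRel_cycle_top hdim hmax hw hdw
    exact ⟨σ', w, hσ', hσ'w, hdw, w, hσ'w, hσw⟩
  · exact absurd hwσ (hVF.notMem_of_fst_mem hirr hστ)

theorem IsGradient.irrefl_transGen_covRel [Finite Cell] {dim : Cell → ℕ}
    (hdim : ∀ σ τ, facet σ τ → dim τ = dim σ + 1) (hV : IsGradient facet V) (x : Cell) :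
    ¬ TransGen (covRel facet V) x x := by
  intro hx
  obtain ⟨τ, hτ, hmax⟩ := Set.exists_max_image {z | TransGen (covRel facet V) z z} dim
    (Set.toFinite _) ⟨x, hx⟩
  obtain ⟨σ, hστ, hσ⟩ := exists_pair_of_covRel_cycle_top hdim hmax hτ rfl
  let B := {σ | TransGen (covRel facet V) σ σ ∧ ∃ τ', (σ, τ') ∈ V ∧ dim τ' = dim τ}
  obtain ⟨σ₀, ⟨hσ₀, τ₀, hσ₀τ₀, hdτ₀⟩, hmin⟩ :=
    (NoClosedVPath.wellFounded_vStep hV.2).has_min B ⟨σ, hσ, τ, hστ, rfl⟩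
  obtain ⟨σ', τ', hσ', hσ'τ', hdτ', hstep⟩ :=
    exists_vStep_of_covRel_cycle_bottom hdim hV.1 hmax hσ₀ hσ₀τ₀ hdτ₀
  exact hmin σ' ⟨hσ', τ', hσ'τ', hdτ'⟩ hstep

theorem isMorse_of_covRel_lt {g : Cell → ℝ} (hg : ∀ x y, covRel facet V x y → g x < g y) :
    IsMorse facet V g :=
  fun σ τ hστ => ⟨fun hnV => hg σ τ (Or.inl ⟨hστ, hnV⟩), fun hV => (hg τ σ (Or.inr hV)).le⟩

theorem IsGradient.exists_isMorse [Finite Cell] {dim : Cell → ℕ}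
    (hdim : ∀ σ τ, facet σ τ → dim τ = dim σ + 1) (hV : IsGradient facet V) :
    ∃ g : Cell → ℝ, IsMorse facet V g := by
  obtain ⟨g, hg⟩ := exists_nat_strictMono_of_irrefl_transGen (hV.irrefl_transGen_covRel hdim)
  exact ⟨fun x => g x, isMorse_of_covRel_lt fun x y hxy => Nat.cast_lt.mpr (hg x y hxy)⟩

theorem IsPseudoMorse.add_smul_isMorse {f g : Cell → ℝ} (hf : IsPseudoMorse facet V f)
    (hg : IsMorse facet V g) {δ : ℝ} (hδ : 0 < δ) : IsMorse facet V (f + δ • g) := by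
  intro σ τ hστ
  simp only [Pi.add_apply, Pi.smul_apply, smul_eq_mul]
  refine ⟨fun hnV => ?_, fun hV => ?_⟩
  · have := (hf σ τ hστ).1 hnV
    have := mul_lt_mul_of_pos_left ((hg σ τ hστ).1 hnV) hδ
    linarith
  · have := (hf σ τ hστ).2 hV
    have := mul_le_mul_of_nonneg_left ((hg σ τ hστ).2 hV) hδ.le
    linarith

theorem IsPseudoMorse.exists_isMorse_near [Fintype Cell] {f g : Cell → ℝ}
    (hf : IsPseudoMorse facet V f) (hg : IsMorse facet V g) {ε : ℝ} (hε : 0 < ε) :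
    ∃ fε : Cell → ℝ, IsMorse facet V fε ∧ ∀ x, |fε x - f x| ≤ ε := by
  set M := ∑ x, |g x|
  have hδ : 0 < ε / (M + 1) := by positivity
  refine ⟨f + (ε / (M + 1)) • g, hf.add_smul_isMorse hg hδ, fun x => ?_⟩
  have hgx : |g x| ≤ M := Finset.single_le_sum (fun y _ => abs_nonneg (g y)) (Finset.mem_univ x)
  calc |(f + (ε / (M + 1)) • g) x - f x| = ε / (M + 1) * |g x| := by
        simp [abs_mul, abs_of_pos hδ]
    _ ≤ ε / (M + 1) * (M + 1) := by gcongr; linarith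
    _ = ε := div_mul_cancel₀ ε (by positivity)

theorem le_of_forall_pos_exists_near_le {a b : ℝ}
    (h : ∀ ε : ℝ, 0 < ε → ∃ a' b' : ℝ, a' ≤ b' ∧ |a' - a| ≤ ε ∧ |b' - b| ≤ ε) : a ≤ b := by
  refine le_of_forall_pos_le_add fun ε hε => ?_
  obtain ⟨a', b', hle, ha, hb⟩ := h (ε / 2) (half_pos hε)
  linarith [(abs_le.mp ha).1, (abs_le.mp hb).2]

theorem isPseudoMorse_of_forall_pos_exists_isMorse {f : Cell → ℝ}
    (h : ∀ ε : ℝ, 0 < ε → ∃ fε : Cell → ℝ, IsMorse facet V fε ∧ ∀ x, |fε x - f x| ≤ ε) :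
    IsPseudoMorse facet V f := by
  intro σ τ hστ
  refine ⟨fun hnV => le_of_forall_pos_exists_near_le fun ε hε => ?_,
    fun hV => le_of_forall_pos_exists_near_le fun ε hε => ?_⟩
  · obtain ⟨fε, hfε, hnear⟩ := h ε hε
    exact ⟨fε σ, fε τ, ((hfε σ τ hστ).1 hnV).le, hnear σ, hnear τ⟩
  · obtain ⟨fε, hfε, hnear⟩ := h ε hε
    exact ⟨fε τ, fε σ, (hfε σ τ hστ).2 hV, hnear τ, hnear σ⟩

end

/-- f is pseudo-Morse consistent with the gradient vector field V iff for
every ε > 0 there is a discrete Morse function f_ε with ‖f_ε − f‖_∞ ≤ ε whose gradient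
vector field is V. -/
theorem stmt1 [Fintype Cell] (dim : Cell → ℕ) (facet : Cell → Cell → Prop)
    (hdim : ∀ σ τ, facet σ τ → dim τ = dim σ + 1)
    (V : Set (Cell × Cell)) (hV : IsGradient facet V) (f : Cell → ℝ) :
    IsPseudoMorse facet V f ↔
      ∀ ε : ℝ, 0 < ε → ∃ fε : Cell → ℝ, IsMorse facet V fε ∧ ∀ x, |fε x - f x| ≤ ε := by
  obtain ⟨g, hg⟩ := hV.exists_isMorse hdim
  exact ⟨fun hf _ hε => hf.exists_isMorse_near hg hε, isPseudoMorse_of_forall_pos_exists_isMorse⟩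
end

section
/- Raising the attracting set of σ and lowering the repelling set of τ to a common level m preserves consistency: if f is a pseudo-Morse function consistent with a gradient vector field V, σ and τ are cells with f(σ) ≤ m ≤ f(τ), and g is defined by g(ρ)=m if (ρ ⪰_V σ and f(ρ)<m) or (ρ ⪯_V τ and f(ρ)>m), and g(ρ)=f(ρ) otherwise, then g is well-defined (the two cases cannot conflict) and g is a pseudo-Morse function consistent with V. -/
open Classical

variable {Cell : Type}

/-- raising the attracting set of σ and lowering the repelling set of τ
to a common level m (with f(σ) ≤ m ≤ f(τ)) is well-defined and preserves consistency. -/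
theorem stmt10 (dim : Cell → ℕ) (facet : Cell → Cell → Prop)
    (hdim : ∀ σ τ, facet σ τ → dim τ = dim σ + 1)
    (V : Set (Cell × Cell)) (hV : IsGradient facet V)
    (f : Cell → ℝ) (hf : IsPseudoMorse facet V f)
    (σ τ : Cell) (m : ℝ) (h1 : f σ ≤ m) (h2 : m ≤ f τ) :
    (∀ ρ, ¬ ((indOrderLe facet V σ ρ ∧ f ρ < m) ∧ (indOrderLe facet V ρ τ ∧ m < f ρ))) ∧
    IsPseudoMorse facet V (fun ρ =>
      if (indOrderLe facet V σ ρ ∧ f ρ < m) ∨ (indOrderLe facet V ρ τ ∧ m < f ρ)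
      then m else f ρ) := by
  have mono : ∀ x y, indOrderLe facet V x y → f x ≤ f y := by
    intro x y h
    induction h with
    | refl => exact le_rfl
    | tail _ hcov ih =>
      refine le_trans ih ?_
      rcases hcov with ⟨hfac, hnv⟩ | hv
      · exact (hf _ _ hfac).1 hnv
      · exact (hf _ _ (hV.1.1 _ hv)).2 hv
  set g : Cell → ℝ := fun ρ =>
    if (indOrderLe facet V σ ρ ∧ f ρ < m) ∨ (indOrderLe facet V ρ τ ∧ m < f ρ)
    then m else f ρ with hg
  have key : ∀ x y, covRel facet V x y → g x ≤ g y := by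
    intro x y hcov
    have hxy : indOrderLe facet V x y := Relation.ReflTransGen.single hcov
    have hfxy : f x ≤ f y := mono x y hxy
    by_cases hx : (indOrderLe facet V σ x ∧ f x < m) ∨ (indOrderLe facet V x τ ∧ m < f x) <;>
      by_cases hy : (indOrderLe facet V σ y ∧ f y < m) ∨ (indOrderLe facet V y τ ∧ m < f y)
    · show (if _ then m else f x) ≤ (if _ then m else f y)
      rw [if_pos hx, if_pos hy]
    · show (if _ then m else f x) ≤ (if _ then m else f y)
      rw [if_pos hx, if_neg hy]
      -- g x = m, g y = f y : show m ≤ f y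
      rcases hx with ⟨hσx, _⟩ | ⟨_, hmx⟩
      · have hσy : indOrderLe facet V σ y := hσx.trans hxy
        by_contra hlt
        exact hy (Or.inl ⟨hσy, lt_of_not_ge hlt⟩)
      · exact le_of_lt (lt_of_lt_of_le hmx hfxy)
    · show (if _ then m else f x) ≤ (if _ then m else f y)
      rw [if_neg hx, if_pos hy]
      -- g x = f x, g y = m : show f x ≤ m
      rcases hy with ⟨_, hym⟩ | ⟨hyτ, _⟩
      · exact le_of_lt (lt_of_le_of_lt hfxy hym)
      · have hxτ : indOrderLe facet V x τ := hxy.trans hyτ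
        by_contra hlt
        exact hx (Or.inr ⟨hxτ, lt_of_not_ge hlt⟩)
    · show (if _ then m else f x) ≤ (if _ then m else f y)
      rw [if_neg hx, if_neg hy]
      exact hfxy
  constructor
  · rintro ρ ⟨⟨_, h3⟩, ⟨_, h4⟩⟩
    exact absurd h4 (not_lt_of_gt h3)
  · intro σ' τ' hfac
    constructor
    · intro hnv
      exact key σ' τ' (Or.inl ⟨hfac, hnv⟩)
    · intro hv
      exact key τ' σ' (Or.inr hv)
end

section
/- The plateau modification moves the function by at most half the persistence: with f, V, σ, τ as above, m = (f(σ)+f(τ))/2, and g the plateau function (g(ρ)=m if ρ ⪰_V σ and f(ρ)<m, or ρ ⪯_V τ and f(ρ)>m; otherwise g(ρ)=f(ρ)), one has ‖g − f‖_∞ ≤ (f(τ) − f(σ))/2. -/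
open Classical

variable {Cell : Type}

lemma pm_mono {facet : Cell → Cell → Prop} {V : Set (Cell × Cell)}
    (hVF : ∀ p ∈ V, facet p.1 p.2) {f : Cell → ℝ}
    (hf : IsPseudoMorse facet V f) {x y : Cell} (h : indOrderLe facet V x y) :
    f x ≤ f y := by
  induction h with
  | refl => exact le_refl _
  | tail _ hcov ih =>
      refine ih.trans ?_
      rcases hcov with ⟨hfc, hnV⟩ | hV'
      · exact (hf _ _ hfc).1 hnV
      · exact (hf _ _ (hVF _ hV')).2 hV'

/-- the plateau modification at level m = (f(σ)+f(τ))/2 moves the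
function by at most half the persistence (f(τ) − f(σ))/2 in the supremum norm. -/
theorem stmt11 (dim : Cell → ℕ) (facet : Cell → Cell → Prop)
    (hdim : ∀ σ τ, facet σ τ → dim τ = dim σ + 1)
    (V : Set (Cell × Cell)) (hV : IsGradient facet V)
    (f : Cell → ℝ) (hf : IsPseudoMorse facet V f)
    (σ τ : Cell) (hστ : f σ ≤ f τ) :
    ∀ ρ, |(if (indOrderLe facet V σ ρ ∧ f ρ < (f σ + f τ) / 2) ∨
            (indOrderLe facet V ρ τ ∧ (f σ + f τ) / 2 < f ρ)
          then (f σ + f τ) / 2 else f ρ) - f ρ| ≤ (f τ - f σ) / 2 := by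
  intro ρ
  set m := (f σ + f τ) / 2 with hm
  split_ifs with h
  · rcases h with ⟨h1, h2⟩ | ⟨h1, h2⟩
    · rw [abs_of_nonneg (by linarith)]
      have := pm_mono hV.1.1 hf h1
      linarith
    · rw [abs_of_nonpos (by linarith)]
      have := pm_mono hV.1.1 hf h1
      linarith
  · simp; linarith
end

section
/- Nesting of descendants in the persistence hierarchy: on a combinatorial surface, if the persistence pair (σ,τ) is a descendant of the persistence pair (σ̃,τ̃) in the persistence hierarchy, then σ̃ ≺ σ ≺ τ ≺ τ̃ in the consistent total order. -/
open Classical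

variable {Cell : Type}

/-- Membership in the order subcomplex K(ρ) (cells ⪯ ρ together with their faces). -/
def SubAt (facet : Cell → Cell → Prop) (lt : Cell → Cell → Prop) (ρ σ : Cell) : Prop :=
  (σ = ρ ∨ lt σ ρ) ∨ ∃ τ, (τ = ρ ∨ lt τ ρ) ∧ Relation.TransGen facet σ τ

/-- Membership in the order subcomplex K(ρ₋) (cells strictly before ρ with their faces). -/
def SubBefore (facet : Cell → Cell → Prop) (lt : Cell → Cell → Prop) (ρ σ : Cell) : Prop :=
  lt σ ρ ∨ ∃ τ, lt τ ρ ∧ Relation.TransGen facet σ τ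

/-- Connectivity of 0-cells through 1-cells inside a subcomplex `sub`. -/
def ConnIn (dim : Cell → ℕ) (facet : Cell → Cell → Prop) (sub : Cell → Prop) :
    Cell → Cell → Prop :=
  Relation.ReflTransGen (fun x y => ∃ e, dim e = 1 ∧ sub e ∧ facet x e ∧ facet y e)

/-- c is the creator (the ≺-minimal 0-cell) of the connected component of a
in the subcomplex `sub`. -/
def CreatorOf (dim : Cell → ℕ) (facet : Cell → Cell → Prop) (lt : Cell → Cell → Prop)
    (sub : Cell → Prop) (c a : Cell) : Prop :=
  dim c = 0 ∧ ConnIn dim facet sub c a ∧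
    ∀ b, dim b = 0 → ConnIn dim facet sub b a → ¬ lt b c

/-- (σ,τ) is a persistence pair of dimension (0,1): the negative 1-cell τ merges two
components of K(τ₋); σ is the younger of the two creators. -/
def PersPair01 (dim : Cell → ℕ) (facet : Cell → Cell → Prop) (lt : Cell → Cell → Prop)
    (σ τ : Cell) : Prop :=
  dim σ = 0 ∧ dim τ = 1 ∧ lt σ τ ∧
  ∃ a b, facet a τ ∧ facet b τ ∧ a ≠ b ∧
    ¬ ConnIn dim facet (SubBefore facet lt τ) a b ∧
    CreatorOf dim facet lt (SubBefore facet lt τ) σ a ∧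
    ∃ c, CreatorOf dim facet lt (SubBefore facet lt τ) c b ∧ lt c σ

/-- (σ,τ) is a persistence pair of dimension (1,2), defined via the dual complex. -/
def PersPair12 (dim : Cell → ℕ) (facet : Cell → Cell → Prop) (lt : Cell → Cell → Prop)
    (σ τ : Cell) : Prop :=
  PersPair01 (fun x => 2 - dim x) (fun x y => facet y x) (fun x y => lt y x) τ σ

/-- (σ,τ) is a persistence pair (on a surface: of dimension (0,1) or (1,2)). -/
def PersPair (dim : Cell → ℕ) (facet : Cell → Cell → Prop) (lt : Cell → Cell → Prop)
    (σ τ : Cell) : Prop :=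
  PersPair01 dim facet lt σ τ ∨ PersPair12 dim facet lt σ τ

/-- lt is a strict total order consistent with (f, V). -/
def ConsistentOrder (facet : Cell → Cell → Prop) (V : Set (Cell × Cell)) (f : Cell → ℝ)
    (lt : Cell → Cell → Prop) : Prop :=
  IsStrictTotalOrder Cell lt ∧ (∀ a b, f a < f b → lt a b) ∧
    ∀ a b, indOrder facet V a b → lt a b

/-- One step of a persistence cancelation sequence: cancel the pair of critical
cells (σ,τ) of V by reversing V along the unique V-path from ∂τ to σ. -/
def CancelStep (facet : Cell → Cell → Prop) (V V' : Set (Cell × Cell)) (σ τ : Cell) : Prop :=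
  IsCritical V σ ∧ IsCritical V τ ∧
  ∃ σ0 l, facet σ0 τ ∧ IsVPath facet V σ0 l ∧ pathLast σ0 l = σ ∧
    (∀ σ0' l', facet σ0' τ → IsVPath facet V σ0' l' → pathLast σ0' l' = σ →
      σ0' = σ0 ∧ l' = l) ∧
    V' = reverseField V τ σ0 l

/-- q = (σ̃,τ̃) is the parent of p = (σ,τ) in the persistence hierarchy:
for (0,1)-pairs, σ̃ creates the component of K(τ) into which [σ] gets merged by τ;
for (1,2)-pairs, dually on the dual complex. -/
def ParentPair (dim : Cell → ℕ) (facet : Cell → Cell → Prop) (lt : Cell → Cell → Prop)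
    (p q : Cell × Cell) : Prop :=
  (PersPair01 dim facet lt p.1 p.2 ∧ PersPair01 dim facet lt q.1 q.2 ∧
    CreatorOf dim facet lt (SubAt facet lt p.2) q.1 p.1) ∨
  (PersPair12 dim facet lt p.1 p.2 ∧ PersPair12 dim facet lt q.1 q.2 ∧
    CreatorOf (fun x => 2 - dim x) (fun x y => facet y x) (fun x y => lt y x)
      (SubAt (fun x y => facet y x) (fun x y => lt y x) p.1) q.2 p.2)

/-- p is a descendant of q in the persistence hierarchy. -/
def DescendantPair (dim : Cell → ℕ) (facet : Cell → Cell → Prop) (lt : Cell → Cell → Prop) :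
    (Cell × Cell) → (Cell × Cell) → Prop :=
  Relation.TransGen (ParentPair dim facet lt)

/-!
A (0,1)-pair (σ,τ) joins in K(τ) the component created by σ to an older one, so the creator σ̃
of the merged component is strictly older than σ. If τ̃ did not come after τ, then K(τ̃) ⊆ K(τ)
and the parent pair (σ̃,τ̃) would itself connect σ̃ to an older 0-cell inside K(τ), contradicting
that σ̃ creates the component there. Pairs of dimension (1,2) are the (0,1)-pairs of the dual
complex with the reversed order, and nesting is transitive along the hierarchy.
-/

section Nesting

variable {dim : Cell → ℕ} {facet lt : Cell → Cell → Prop}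

theorem ConnIn.symm {sub : Cell → Prop} {x y : Cell} (h : ConnIn dim facet sub x y) :
    ConnIn dim facet sub y x := by
  have : Std.Symm (fun x y => ∃ e, dim e = 1 ∧ sub e ∧ facet x e ∧ facet y e) :=
    ⟨fun _ _ ⟨e, he, hs, hx, hy⟩ => ⟨e, he, hs, hy, hx⟩⟩
  exact symm_of (Relation.ReflTransGen _) h

theorem ConnIn.mono {s t : Cell → Prop} (hst : ∀ e, s e → t e) {x y : Cell}
    (h : ConnIn dim facet s x y) : ConnIn dim facet t x y :=
  Relation.ReflTransGen.mono (fun _ _ ⟨e, he, hs, hx, hy⟩ => ⟨e, he, hst e hs, hx, hy⟩) _ _ h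

theorem subAt_of_subBefore {ρ e : Cell} (h : SubBefore facet lt ρ e) : SubAt facet lt ρ e := by
  rcases h with h | ⟨τ, hτ, hf⟩
  · exact Or.inl (Or.inr h)
  · exact Or.inr ⟨τ, Or.inr hτ, hf⟩

theorem subAt_mono [IsTrans Cell lt] {ρ ρ' e : Cell} (hρ : ρ' = ρ ∨ lt ρ' ρ)
    (h : SubAt facet lt ρ' e) : SubAt facet lt ρ e := by
  have hle : ∀ x, x = ρ' ∨ lt x ρ' → x = ρ ∨ lt x ρ := by
    rintro x (rfl | hx)
    · exact hρ
    · rcases hρ with rfl | hρ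
      · exact Or.inr hx
      · exact Or.inr (_root_.trans hx hρ)
  rcases h with h | ⟨τ, hτ, hf⟩
  · exact Or.inl (hle e h)
  · exact Or.inr ⟨τ, hle τ hτ, hf⟩

theorem PersPair01.exists_older_connIn_subAt {σ τ : Cell} (hp : PersPair01 dim facet lt σ τ) :
    ∃ c, dim c = 0 ∧ lt c σ ∧ ConnIn dim facet (SubAt facet lt τ) c σ := by
  obtain ⟨-, hτ, -, a, b, ha, hb, -, -, ⟨-, hσa, -⟩, c, ⟨hc, hcb, -⟩, hcσ⟩ := hp
  have hba : ConnIn dim facet (SubAt facet lt τ) b a :=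
    .single ⟨τ, hτ, Or.inl (Or.inl rfl), hb, ha⟩
  refine ⟨c, hc, hcσ, ?_⟩
  exact ((hcb.mono fun _ => subAt_of_subBefore).trans hba).trans
    (hσa.mono fun _ => subAt_of_subBefore).symm

theorem PersPair01.nested_of_creatorOf [IsStrictTotalOrder Cell lt] {σ τ σ' τ' : Cell}
    (hp : PersPair01 dim facet lt σ τ) (hq : PersPair01 dim facet lt σ' τ')
    (hσ' : CreatorOf dim facet lt (SubAt facet lt τ) σ' σ) :
    lt σ' σ ∧ lt σ τ ∧ lt τ τ' := by
  obtain ⟨-, hσ'σ, hmin⟩ := hσ'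
  obtain ⟨c, hc, hcσ, hcσ_conn⟩ := hp.exists_older_connIn_subAt
  refine ⟨trans_trichotomous_left (hmin c hc hcσ_conn) hcσ, hp.2.2.1, ?_⟩
  by_contra hττ'
  have hτ'τ : τ' = τ ∨ lt τ' τ := (trichotomous_of lt τ τ').resolve_left hττ' |>.imp Eq.symm id
  obtain ⟨c', hc', hc'σ', hc'σ'_conn⟩ := hq.exists_older_connIn_subAt
  exact hmin c' hc' ((hc'σ'_conn.mono fun _ => subAt_mono hτ'τ).trans hσ'σ) hc'σ'

theorem ParentPair.nested [IsStrictTotalOrder Cell lt] {p q : Cell × Cell}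
    (h : ParentPair dim facet lt p q) : lt q.1 p.1 ∧ lt p.1 p.2 ∧ lt p.2 q.2 := by
  rcases h with ⟨hp, hq, hc⟩ | ⟨hp, hq, hc⟩
  · exact hp.nested_of_creatorOf hq hc
  · obtain ⟨h₁, h₂, h₃⟩ := hp.nested_of_creatorOf hq hc
    exact ⟨h₃, h₂, h₁⟩

theorem DescendantPair.nested [IsStrictTotalOrder Cell lt] {p q : Cell × Cell}
    (h : DescendantPair dim facet lt p q) : lt q.1 p.1 ∧ lt p.1 p.2 ∧ lt p.2 q.2 := by
  induction h with
  | single h => exact h.nested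
  | tail _ hqr ih =>
    obtain ⟨hr₁, -, hr₂⟩ := hqr.nested
    exact ⟨_root_.trans hr₁ ih.1, ih.2.1, _root_.trans ih.2.2 hr₂⟩

end Nesting

theorem stmt15_general (dim : Cell → ℕ) (facet : Cell → Cell → Prop)
    (V : Set (Cell × Cell))
    (f : Cell → ℝ)
    (lt : Cell → Cell → Prop) (hlt : ConsistentOrder facet V f lt)
    (p q : Cell × Cell) (h : DescendantPair dim facet lt p q) :
    lt q.1 p.1 ∧ lt p.1 p.2 ∧ lt p.2 q.2 :=
  have := hlt.1
  h.nested

/-- on a combinatorial surface, a descendant (σ,τ) of a persistence pair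
(σ̃,τ̃) in the persistence hierarchy is nested in it: σ̃ ≺ σ ≺ τ ≺ τ̃. -/
theorem stmt15 [Fintype Cell] (dim : Cell → ℕ) (facet : Cell → Cell → Prop)
    (hsurf : IsCombSurface dim facet)
    (V : Set (Cell × Cell)) (hV : IsGradient facet V)
    (f : Cell → ℝ) (hf : IsPseudoMorse facet V f)
    (lt : Cell → Cell → Prop) (hlt : ConsistentOrder facet V f lt)
    (p q : Cell × Cell) (h : DescendantPair dim facet lt p q) :
    lt q.1 p.1 ∧ lt p.1 p.2 ∧ lt p.2 q.2 :=
  stmt15_general dim facet V f lt hlt p q h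
end
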